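/- arXiv:2406.17281 — 4 statements merged into one kernel-verified Lean document; each statement's English description precedes it below -/
import Mathlib

section
/- Let H ≥ 1 and α_t = (H+1)/(H+t), with α_i^t = α_i · ∏_{j=i+1}^t (1-α_j). Then for every t ≥ 1, max_{1 ≤ i ≤ t} α_i^t ≤ 2H/t. -/
lemma telescope_aux (H : ℝ) (hH : 0 < H) (i : ℕ) :
    ∀ t : ℕ, i ≤ t →
      ∏ j ∈ Finset.Icc (i + 1) t, ((H + j - 1) / (H + j)) = (H + i) / (H + t) := by
  intro t
  induction t with
  | zero => intro h; interval_cases i; simp; field_simp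
  | succ n ih =>
    intro h
    rcases Nat.lt_or_ge i (n + 1) with h' | h'
    · have hin : i ≤ n := Nat.lt_succ_iff.mp h'
      rw [Finset.prod_Icc_succ_top (by omega), ih hin]
      have h1 : (H : ℝ) + n > 0 := by positivity
      have h2 : (H : ℝ) + (n + 1 : ℕ) > 0 := by positivity
      push_cast at *
      field_simp
      ring
    · have : i = n + 1 := le_antisymm h h'
      subst this
      simp
      field_simp
/-- For `H ≥ 1`, `α t = (H+1)/(H+t)`, and `α_i^t = α i * ∏_{j=i+1}^t (1 - α j)`,
the maximum over `1 ≤ i ≤ t` of `α_i^t` is at most `2H/t`. -/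
theorem max_lr_weight_le (H : ℕ) (hH : 1 ≤ H)
    (α : ℕ → ℝ) (hα : ∀ t, α t = ((H : ℝ) + 1) / ((H : ℝ) + t))
    (w : ℕ → ℕ → ℝ)
    (hw : ∀ i t, w i t = α i * ∏ j ∈ Finset.Icc (i + 1) t, (1 - α j)) :
    ∀ t (ht : 1 ≤ t),
      (Finset.Icc 1 t).sup' (by simp [Finset.nonempty_Icc]; omega) (fun i => w i t)
        ≤ 2 * (H : ℝ) / t := by
  intro t ht
  have hHpos : (0 : ℝ) < H := by exact_mod_cast hH
  apply Finset.sup'_le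
  intro i hi
  simp only [Finset.mem_Icc] at hi
  obtain ⟨hi1, hit⟩ := hi
  have hHi : (0 : ℝ) < (H : ℝ) + i := by positivity
  have hHt : (0 : ℝ) < (H : ℝ) + t := by positivity
  have htpos : (0 : ℝ) < t := by exact_mod_cast ht
  -- bound the product
  have hprod : ∏ j ∈ Finset.Icc (i + 1) t, (1 - α j)
      ≤ ((H : ℝ) + i) / ((H : ℝ) + t) := by
    rw [← telescope_aux (H : ℝ) hHpos i t hit]
    apply Finset.prod_le_prod
    · intro j hj
      simp only [Finset.mem_Icc] at hj
      have hj1 : (1 : ℕ) ≤ j := by omega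
      rw [hα j]
      have hHj : (0 : ℝ) < (H : ℝ) + j := by positivity
      rw [sub_nonneg, div_le_one hHj]
      have : (1 : ℝ) ≤ j := by exact_mod_cast hj1
      linarith
    · intro j hj
      simp only [Finset.mem_Icc] at hj
      have hHj : (0 : ℝ) < (H : ℝ) + j := by positivity
      rw [hα j]
      have h1 : 1 - ((H : ℝ) + 1) / ((H : ℝ) + j) = ((j : ℝ) - 1) / ((H : ℝ) + j) := by
        field_simp
        ring
      rw [h1]
      gcongr
      linarith
  have hαi : α i = ((H : ℝ) + 1) / ((H : ℝ) + i) := hα i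
  have hαipos : 0 < α i := by rw [hαi]; positivity
  have : w i t ≤ ((H : ℝ) + 1) / ((H : ℝ) + i) * (((H : ℝ) + i) / ((H : ℝ) + t)) := by
    rw [hw, hαi]
    apply mul_le_mul_of_nonneg_left hprod (by positivity)
  have heq : ((H : ℝ) + 1) / ((H : ℝ) + i) * (((H : ℝ) + i) / ((H : ℝ) + t))
      = ((H : ℝ) + 1) / ((H : ℝ) + t) := by field_simp
  rw [heq] at this
  refine this.trans ?_
  rw [div_le_div_iff₀ hHt htpos]
  have hH1 : (1 : ℝ) ≤ H := by exact_mod_cast hH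
  nlinarith [mul_pos hHpos htpos]
end

section
/- Let H ≥ 1 and α_t = (H+1)/(H+t), with α_i^t = α_i · ∏_{j=i+1}^t (1-α_j). Then for every t ≥ 1, ∑_{i=1}^t (α_i^t)^2 ≤ 2H/t. -/
/-- For `H ≥ 1`, `α t = (H+1)/(H+t)`, and `α_i^t = α i * ∏_{j=i+1}^t (1 - α j)`,
we have `∑_{i=1}^t (α_i^t)^2 ≤ 2H/t` for every `t ≥ 1`. -/
theorem sum_sq_lr_weights_le (H : ℕ) (hH : 1 ≤ H)
    (α : ℕ → ℝ) (hα : ∀ t, α t = ((H : ℝ) + 1) / ((H : ℝ) + t))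
    (w : ℕ → ℕ → ℝ)
    (hw : ∀ i t, w i t = α i * ∏ j ∈ Finset.Icc (i + 1) t, (1 - α j)) :
    ∀ t, 1 ≤ t → ∑ i ∈ Finset.Icc 1 t, (w i t) ^ 2 ≤ 2 * (H : ℝ) / t := by
  have hH1 : (1:ℝ) ≤ H := by exact_mod_cast hH
  have hHpos : (0:ℝ) < H := by linarith
  have hden : ∀ t : ℕ, (0:ℝ) < (H:ℝ) + t := fun t => by positivity
  have hαpos : ∀ t, 0 < α t := fun t => by rw [hα]; positivity
  have h1α : ∀ j : ℕ, 1 ≤ j → 0 ≤ 1 - α j := by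
    intro j hj
    rw [hα, sub_nonneg, div_le_one (hden j)]
    have : (1:ℝ) ≤ j := by exact_mod_cast hj
    linarith
  have hstep : ∀ i t : ℕ, i ≤ t → w i (t+1) = w i t * (1 - α (t+1)) := by
    intro i t hit
    rw [hw, hw, Finset.prod_Icc_succ_top (by omega : i + 1 ≤ t + 1)]
    ring
  have hwnonneg : ∀ i t, 1 ≤ i → 0 ≤ w i t := by
    intro i t hi
    rw [hw]
    refine mul_nonneg (hαpos i).le (Finset.prod_nonneg ?_)
    intro j hj
    exact h1α j (by have := (Finset.mem_Icc.mp hj).1; omega)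
  have hsum : ∀ t, 1 ≤ t → ∑ i ∈ Finset.Icc 1 t, w i t = 1 := by
    intro t ht
    induction t, ht using Nat.le_induction with
    | base =>
      simp only [Finset.Icc_self, Finset.sum_singleton, hw]
      rw [show (1:ℕ)+1 = 2 by rfl, Finset.Icc_eq_empty (by omega), Finset.prod_empty,
        mul_one, hα]
      rw [div_eq_one_iff_eq (hden 1).ne']
      norm_num
    | succ t ht ih =>
      rw [Finset.sum_Icc_succ_top (by omega : 1 ≤ t + 1)]
      have key : ∀ i ∈ Finset.Icc 1 t, w i (t+1) = w i t * (1 - α (t+1)) := by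
        intro i hi
        exact hstep i t (Finset.mem_Icc.mp hi).2
      rw [Finset.sum_congr rfl key, ← Finset.sum_mul, ih]
      rw [hw (t+1) (t+1), Finset.Icc_eq_empty (by omega), Finset.prod_empty]
      ring
  have hbound : ∀ i t : ℕ, 1 ≤ i → i ≤ t → w i t ≤ ((H:ℝ)+1)/((H:ℝ)+t) := by
    intro i t hi hit
    induction t, hit using Nat.le_induction with
    | base =>
      rw [hw, Finset.Icc_eq_empty (by omega), Finset.prod_empty, mul_one, hα]
    | succ t hit ih =>
      rw [hstep i t hit]
      have h1a : 1 - α (t+1) = ((t:ℝ))/((H:ℝ)+(t+1)) := by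
        rw [hα]
        have hd : (0:ℝ) < (H:ℝ) + ((t:ℕ)+1 : ℕ) := hden (t+1)
        push_cast at hd ⊢
        field_simp
        ring
      rw [h1a]
      have h1 : w i t * ((t:ℝ)/((H:ℝ)+(t+1))) ≤ ((H:ℝ)+1)/((H:ℝ)+t) * ((t:ℝ)/((H:ℝ)+(t+1))) :=
        mul_le_mul_of_nonneg_right ih (by positivity)
      refine h1.trans ?_
      have hd1 : (0:ℝ) < (H:ℝ) + t := hden t
      have hd2 : (0:ℝ) < (H:ℝ) + (t+1) := by positivity
      have hcast : ((t+1:ℕ):ℝ) = (t:ℝ) + 1 := by push_cast; ring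
      rw [hcast, div_mul_div_comm, div_le_div_iff₀ (by positivity) hd2]
      nlinarith [mul_nonneg (mul_nonneg (by linarith : (0:ℝ) ≤ (H:ℝ)+1) hd2.le) hHpos.le]
  intro t ht
  have htpos : (0:ℝ) < t := by exact_mod_cast ht
  have h2H : ((H:ℝ)+1)/((H:ℝ)+t) ≤ 2*(H:ℝ)/t := by
    rw [div_le_div_iff₀ (hden t) htpos]
    have ht1 : (1:ℝ) ≤ t := by exact_mod_cast ht
    nlinarith [mul_nonneg htpos.le (by linarith : (0:ℝ) ≤ (H:ℝ)-1), mul_pos hHpos hHpos]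
  calc ∑ i ∈ Finset.Icc 1 t, (w i t) ^ 2
      ≤ ∑ i ∈ Finset.Icc 1 t, (2*(H:ℝ)/t) * w i t := by
        apply Finset.sum_le_sum
        intro i hi
        have hi1 := (Finset.mem_Icc.mp hi).1
        have hit := (Finset.mem_Icc.mp hi).2
        rw [sq]
        exact mul_le_mul_of_nonneg_right ((hbound i t hi1 hit).trans h2H)
          (hwnonneg i t hi1)
    _ = 2*(H:ℝ)/t := by rw [← Finset.mul_sum, hsum t ht, mul_one]
end

section
/- Let H ≥ 1 and α_t = (H+1)/(H+t), with α_i^t = α_i · ∏_{j=i+1}^t (1-α_j) for t ≥ i. Then for every fixed i ≥ 1, the series ∑_{t=i}^∞ α_i^t converges and equals 1 + 1/H. -/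
/-!
Writing `P N = ∏_{j=i+1}^{i+N} (1 - α_j)`, one has `(H+i+N+1) P (N+1) = (i+N) P N`, so
`T N = (H+i+N) P N` satisfies `T N - T (N+1) = H P N`. Hence `∑ α_i^t` telescopes to
`α_i T 0 / H = 1 + 1/H`, provided `T N → 0`; this holds because `(i+N) T N` is antitone when `H ≥ 1`.
-/

open Filter Finset Topology

theorem hasSum_sub_succ_of_antitone {g : ℕ → ℝ} (hg : Antitone g)
    (hlim : Tendsto g atTop (𝓝 0)) : HasSum (fun n => g n - g (n + 1)) (g 0) := by
  rw [hasSum_iff_tendsto_nat_of_nonneg fun n => sub_nonneg.2 (hg n.le_succ)]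
  simp only [sum_range_sub']
  simpa using tendsto_const_nhds.sub hlim

theorem tendsto_zero_of_antitone_add_mul {u : ℕ → ℝ} {x : ℝ} (hx : 0 ≤ x) (hu : ∀ N, 0 ≤ u N)
    (h : Antitone fun N : ℕ => (x + N) * u N) : Tendsto u atTop (𝓝 0) := by
  have hbound : ∀ N : ℕ, 1 ≤ N → u N ≤ x * u 0 / (x + N) := by
    intro N hN
    have hpos : 0 < x + N := by
      have : (1 : ℝ) ≤ N := by exact_mod_cast hN
      linarith
    rw [le_div_iff₀ hpos, mul_comm]
    simpa using h (Nat.zero_le N)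
  refine squeeze_zero' (Eventually.of_forall hu) (eventually_atTop.2 ⟨1, hbound⟩) ?_
  exact tendsto_const_nhds.div_atTop (tendsto_atTop_add_const_left _ _ tendsto_natCast_atTop_atTop)

noncomputable section

def learningRate (a : ℝ) (t : ℕ) : ℝ := (a + 1) / (a + t)

def learningRateProd (a : ℝ) (i N : ℕ) : ℝ := ∏ j ∈ Icc (i + 1) (i + N), (1 - learningRate a j)

def learningRateTail (a : ℝ) (i N : ℕ) : ℝ := (a + i + N) * learningRateProd a i N

end

section

variable {a : ℝ} (i : ℕ)

theorem learningRate_le_one (ha : 0 ≤ a) {t : ℕ} (ht : 1 ≤ t) : learningRate a t ≤ 1 := by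
  have : (1 : ℝ) ≤ t := by exact_mod_cast ht
  exact div_le_one_of_le₀ (by linarith) (by linarith)

theorem learningRateProd_nonneg (ha : 0 ≤ a) (N : ℕ) : 0 ≤ learningRateProd a i N :=
  prod_nonneg fun j hj =>
    sub_nonneg.2 (learningRate_le_one ha (by linarith [(mem_Icc.1 hj).1]))

theorem add_mul_learningRateProd_succ (ha : 0 ≤ a) (N : ℕ) :
    (a + i + N + 1) * learningRateProd a i (N + 1) = (i + N) * learningRateProd a i N := by
  have hpos : 0 < a + i + N + 1 := by positivity
  rw [learningRateProd, show i + (N + 1) = i + N + 1 by omega,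
    prod_Icc_succ_top (by omega), ← learningRateProd, learningRate]
  push_cast
  field_simp
  ring

theorem learningRateTail_sub_succ (ha : 0 ≤ a) (N : ℕ) :
    learningRateTail a i N - learningRateTail a i (N + 1) = a * learningRateProd a i N := by
  have h := add_mul_learningRateProd_succ i ha N
  simp only [learningRateTail, Nat.cast_succ, ← add_assoc] at h ⊢
  rw [h]
  ring

theorem learningRateTail_nonneg (ha : 0 ≤ a) (N : ℕ) : 0 ≤ learningRateTail a i N :=
  mul_nonneg (by positivity) (learningRateProd_nonneg i ha N)

theorem antitone_learningRateTail (ha : 0 ≤ a) : Antitone (learningRateTail a i) :=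
  antitone_nat_of_succ_le fun N => by
    have := learningRateTail_sub_succ i ha N
    nlinarith [learningRateProd_nonneg i ha N]

theorem antitone_add_mul_learningRateTail (ha : 1 ≤ a) :
    Antitone fun N : ℕ => (i + N) * learningRateTail a i N := by
  have ha0 : 0 ≤ a := by linarith
  refine antitone_nat_of_succ_le fun N => ?_
  have h := add_mul_learningRateProd_succ i ha0 N
  have hP := learningRateProd_nonneg i ha0 N
  simp only [learningRateTail, Nat.cast_succ, ← add_assoc] at h ⊢
  rw [h]
  have hiN : (0 : ℝ) ≤ i + N := by positivity
  nlinarith [mul_nonneg hiN hP]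

theorem tendsto_learningRateTail (ha : 1 ≤ a) :
    Tendsto (learningRateTail a i) atTop (𝓝 0) :=
  tendsto_zero_of_antitone_add_mul i.cast_nonneg (learningRateTail_nonneg i (zero_le_one.trans ha))
    (antitone_add_mul_learningRateTail i ha)

theorem hasSum_learningRate_mul_learningRateProd (ha : 1 ≤ a) :
    HasSum (fun N => learningRate a i * learningRateProd a i N) (1 + 1 / a) := by
  have ha0 : 0 ≤ a := by linarith
  have hsum := (hasSum_sub_succ_of_antitone (antitone_learningRateTail i ha0)
    (tendsto_learningRateTail i ha)).mul_left (learningRate a i / a)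
  have hterm : ∀ N, learningRate a i / a *
      (learningRateTail a i N - learningRateTail a i (N + 1)) =
      learningRate a i * learningRateProd a i N := fun N => by
    rw [learningRateTail_sub_succ i ha0]
    field_simp
  have hvalue : learningRate a i / a * learningRateTail a i 0 = 1 + 1 / a := by
    have : a + i ≠ 0 := by positivity
    simp only [learningRateTail, learningRateProd, learningRate, add_zero, Nat.cast_zero,
      Icc_eq_empty_of_lt (Nat.lt_succ_self i), prod_empty, mul_one]
    field_simp
  simpa only [hterm, hvalue] using hsum

end

/-- For `H ≥ 1`, `α t = (H+1)/(H+t)`, and `α_i^t = α i * ∏_{j=i+1}^t (1 - α j)`,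
for every fixed `i ≥ 1` the series `∑_{t=i}^∞ α_i^t` converges and equals `1 + 1/H`. -/
theorem tsum_lr_weights_eq (H : ℕ) (hH : 1 ≤ H)
    (α : ℕ → ℝ) (hα : ∀ t, α t = ((H : ℝ) + 1) / ((H : ℝ) + t))
    (w : ℕ → ℕ → ℝ)
    (hw : ∀ i t, w i t = α i * ∏ j ∈ Finset.Icc (i + 1) t, (1 - α j)) :
    ∀ i, 1 ≤ i → HasSum (fun n : ℕ => w i (i + n)) (1 + 1 / (H : ℝ)) := by
  intro i _
  obtain rfl : α = learningRate H := funext hα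
  have hw' : (fun n => w i (i + n)) = fun n => learningRate H i * learningRateProd H i n :=
    funext fun n => hw i (i + n)
  rw [hw']
  exact hasSum_learningRate_mul_learningRateProd i (by exact_mod_cast hH)
end

section
/- Let H ≥ 1 and α_t = (H+1)/(H+t), with α_i^t = α_i · ∏_{j=i+1}^t (1-α_j). Then for every t ≥ 1, ∑_{i=1}^t α_i^t / √i ≤ 2/√t. -/
/-!
Writing `S t = ∑ i ≤ t, α_i^t / √i`, the weights satisfy `α_i^(t+1) = (1 - α_(t+1)) α_i^t` for
`i ≤ t` and `α_(t+1)^(t+1) = α_(t+1)`, so `S (t+1) = (1 - α_(t+1)) S t + α_(t+1) / √(t+1)`.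
Given `S t ≤ 2 / √t`, the resulting bound `(1 - a) 2 / √t + a / √(t+1)` with `a = α_(t+1)` is
decreasing in `a`, so it suffices to check it at the smallest admissible value `a = 1/(t+1)`,
where it reduces to the AM-GM inequality `2 √t √(t+1) ≤ 2t + 1`.
-/

open Finset Real

section Weights

variable {R : Type*} [CommRing R] (α : ℕ → R)

def lrWeight (i t : ℕ) : R :=
  α i * ∏ j ∈ Icc (i + 1) t, (1 - α j)

theorem lrWeight_self (t : ℕ) : lrWeight α t t = α t := by
  simp [lrWeight]

theorem lrWeight_succ_right {i t : ℕ} (h : i ≤ t) :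
    lrWeight α i (t + 1) = (1 - α (t + 1)) * lrWeight α i t := by
  rw [lrWeight, lrWeight, prod_Icc_succ_top (by omega)]
  ring

theorem sum_lrWeight_mul_succ (f : ℕ → R) (t : ℕ) :
    ∑ i ∈ Icc 1 (t + 1), lrWeight α i (t + 1) * f i
      = (1 - α (t + 1)) * ∑ i ∈ Icc 1 t, lrWeight α i t * f i + α (t + 1) * f (t + 1) := by
  rw [sum_Icc_succ_top (by omega), lrWeight_self, mul_sum]
  congr 1
  refine sum_congr rfl fun i hi => ?_
  rw [lrWeight_succ_right α (mem_Icc.1 hi).2, mul_assoc]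

end Weights

theorem one_sub_mul_two_div_sqrt_add_div_sqrt_le {x a : ℝ} (hx : 0 < x) (ha : 1 / (x + 1) ≤ a) :
    (1 - a) * (2 / √x) + a / √(x + 1) ≤ 2 / √(x + 1) := by
  have hs : 0 < √x := sqrt_pos.2 hx
  have hu : 0 < √(x + 1) := sqrt_pos.2 (by linarith)
  have hs2 : √x ^ 2 = x := sq_sqrt hx.le
  have hslope : 0 ≤ 2 / √x - 1 / √(x + 1) := by
    have : 1 / √(x + 1) ≤ 1 / √x := one_div_le_one_div_of_le hs (sqrt_le_sqrt (by linarith))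
    have : 1 / √x ≤ 2 / √x := div_le_div_of_nonneg_right (by norm_num) hs.le
    linarith
  have hamgm : 2 * √x * √(x + 1) ≤ x + (x + 1) := by
    have := two_mul_le_add_sq √x √(x + 1)
    rwa [hs2, sq_sqrt (by linarith)] at this
  calc (1 - a) * (2 / √x) + a / √(x + 1) = 2 / √x - a * (2 / √x - 1 / √(x + 1)) := by ring
    _ ≤ 2 / √x - 1 / (x + 1) * (2 / √x - 1 / √(x + 1)) := by gcongr
    _ = (2 * √x * √(x + 1) + 1) / ((x + 1) * √(x + 1)) := by
      field_simp
      linear_combination (-2 * √(x + 1)) * hs2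
    _ ≤ 2 * (x + 1) / ((x + 1) * √(x + 1)) := by gcongr; linarith
    _ = 2 / √(x + 1) := by field_simp

theorem sum_lrWeight_div_sqrt_le (α : ℕ → ℝ) (hα_ge : ∀ t : ℕ, 1 / ((t : ℝ) + 1) ≤ α (t + 1))
    (hα_le : ∀ t : ℕ, α (t + 1) ≤ 1) (t : ℕ) (ht : 1 ≤ t) :
    ∑ i ∈ Icc 1 t, lrWeight α i t / √i ≤ 2 / √t := by
  induction t, ht using Nat.le_induction with
  | base => simpa [lrWeight_self] using (hα_le 0).trans one_le_two
  | succ n hn ih =>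
    have hrec := sum_lrWeight_mul_succ α (fun i : ℕ => 1 / √(i : ℝ)) n
    simp only [mul_one_div] at hrec
    rw [hrec]
    push_cast
    calc (1 - α (n + 1)) * ∑ i ∈ Icc 1 n, lrWeight α i n / √i + α (n + 1) / √(n + 1)
        ≤ (1 - α (n + 1)) * (2 / √n) + α (n + 1) / √(n + 1) := by
          gcongr
          exact sub_nonneg.2 (hα_le n)
      _ ≤ 2 / √(n + 1) :=
          one_sub_mul_two_div_sqrt_add_div_sqrt_le (by exact_mod_cast hn) (hα_ge n)

theorem sum_lr_weights_div_sqrt_le_general (H : ℕ)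
    (α : ℕ → ℝ) (hα : ∀ t, α t = ((H : ℝ) + 1) / ((H : ℝ) + t))
    (w : ℕ → ℕ → ℝ)
    (hw : ∀ i t, w i t = α i * ∏ j ∈ Finset.Icc (i + 1) t, (1 - α j)) :
    ∀ t, 1 ≤ t →
      ∑ i ∈ Finset.Icc 1 t, w i t / Real.sqrt i ≤ 2 / Real.sqrt t := by
  obtain rfl : w = lrWeight α := funext₂ hw
  refine sum_lrWeight_div_sqrt_le α (fun t => ?_) (fun t => ?_)
  · rw [hα, div_le_div_iff₀ (by positivity) (by positivity)]
    push_cast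
    nlinarith [H.cast_nonneg (α := ℝ), t.cast_nonneg (α := ℝ)]
  · rw [hα, div_le_one (by positivity)]
    push_cast
    linarith [t.cast_nonneg (α := ℝ)]

/-- For `H ≥ 1`, `α t = (H+1)/(H+t)`, and `α_i^t = α i * ∏_{j=i+1}^t (1 - α j)`,
we have `∑_{i=1}^t α_i^t / √i ≤ 2/√t` for every `t ≥ 1`. -/
theorem sum_lr_weights_div_sqrt_le (H : ℕ) (hH : 1 ≤ H)
    (α : ℕ → ℝ) (hα : ∀ t, α t = ((H : ℝ) + 1) / ((H : ℝ) + t))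
    (w : ℕ → ℕ → ℝ)
    (hw : ∀ i t, w i t = α i * ∏ j ∈ Finset.Icc (i + 1) t, (1 - α j)) :
    ∀ t, 1 ≤ t →
      ∑ i ∈ Finset.Icc 1 t, w i t / Real.sqrt i ≤ 2 / Real.sqrt t :=
  sum_lr_weights_div_sqrt_le_general H α hα w hw
end
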